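/- Let H and H_k be symmetric positive semidefinite p×p real matrices and ρ > 0. Then the operator norm of (H + ρI)⁻¹ - (H_k + ρI)⁻¹ is at most (1/ρ)·‖E‖/(‖E‖ + ρ), where E = H - H_k and ‖·‖ denotes the operator norm, provided E ≠ 0; if E = 0 the difference is zero. -/

import Mathlib

/-!
Write `A = H + ρ I`, `B = Hk + ρ I` and `e = ‖H - Hk‖`. In the Loewner order `-e I ≤ H - Hk ≤ e I`,
so `A ≤ B + e I`, and operator antitonicity of the inverse gives
`B⁻¹ - A⁻¹ ≤ B⁻¹ - (B + e I)⁻¹`. Since `B ≥ ρ I` and `t ↦ 1/t - 1/(t + e)` decreases on `[ρ, ∞)`,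
the right side is at most `e / (ρ (ρ + e)) I`. By symmetry the same bound holds for `A⁻¹ - B⁻¹`,
and for a Hermitian matrix a two-sided Loewner bound `-c I ≤ M ≤ c I` is a bound `‖M‖ ≤ c`
on the operator norm.
-/

open Matrix
open scoped Matrix.Norms.L2Operator MatrixOrder ComplexOrder

lemma ContinuousLinearMap.abs_reApplyInnerSelf_le {𝕜 E : Type*} [RCLike 𝕜]
    [NormedAddCommGroup E] [InnerProductSpace 𝕜 E] (T : E →L[𝕜] E) (x : E) :
    |T.reApplyInnerSelf x| ≤ ‖T‖ * ‖x‖ ^ 2 :=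
  calc |T.reApplyInnerSelf x| ≤ ‖T x‖ * ‖x‖ :=
        (RCLike.abs_re_le_norm _).trans (norm_inner_le_norm _ _)
    _ ≤ ‖T‖ * ‖x‖ * ‖x‖ := by gcongr; exact T.le_opNorm x
    _ = ‖T‖ * ‖x‖ ^ 2 := by ring

namespace Matrix

variable {𝕜 n : Type*} [RCLike 𝕜] [DecidableEq n]

lemma posDef_of_smul_one_le {A : Matrix n n 𝕜} {ρ : ℝ} (hρ : 0 < ρ) (hA : ρ • 1 ≤ A) :
    A.PosDef := by
  simpa using (PosDef.one.smul hρ).add_posSemidef hA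

variable [Fintype n]

lemma toEuclideanCLM_real_smul_one (c : ℝ) :
    toEuclideanCLM (n := n) (𝕜 := 𝕜) (c • 1) = c • 1 := by
  rw [RCLike.real_smul_eq_coe_smul (K := 𝕜), map_smul, map_one]
  exact (RCLike.real_smul_eq_coe_smul (K := 𝕜) c
    (1 : EuclideanSpace 𝕜 n →L[𝕜] EuclideanSpace 𝕜 n)).symm

lemma IsHermitian.le_smul_one_iff {M : Matrix n n 𝕜} (hM : M.IsHermitian) (c : ℝ) :
    M ≤ c • 1 ↔
      ∀ x, (toEuclideanCLM (n := n) (𝕜 := 𝕜) M).reApplyInnerSelf x ≤ c * ‖x‖ ^ 2 := by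
  have hsymm : (toEuclideanCLM (n := n) (𝕜 := 𝕜) (c • 1 - M)).IsSymmetric := by
    rw [coe_toEuclideanCLM_eq_toEuclideanLin, isSymmetric_toEuclideanLin_iff]
    exact (isHermitian_one.smul (IsSelfAdjoint.all c)).sub hM
  rw [le_iff, ← isPositive_toEuclideanLin_iff, ← coe_toEuclideanCLM_eq_toEuclideanLin,
    ContinuousLinearMap.isPositive_toLinearMap_iff, ContinuousLinearMap.isPositive_def,
    and_iff_right hsymm, map_sub, toEuclideanCLM_real_smul_one]
  refine forall_congr' fun x => ?_
  simp only [ContinuousLinearMap.reApplyInnerSelf_apply, _root_.sub_apply, _root_.smul_apply,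
    one_apply_eq_self, inner_sub_left, map_sub, sub_nonneg]
  rw [RCLike.real_smul_eq_coe_smul (K := 𝕜) c x, inner_smul_real_left, RCLike.smul_re,
    inner_self_eq_norm_sq]

lemma IsHermitian.norm_le_iff {M : Matrix n n 𝕜} (hM : M.IsHermitian) {c : ℝ} (hc : 0 ≤ c) :
    ‖M‖ ≤ c ↔ -(c • 1) ≤ M ∧ M ≤ c • 1 := by
  have hsymm : (toEuclideanCLM (n := n) (𝕜 := 𝕜) M :
      EuclideanSpace 𝕜 n →ₗ[𝕜] EuclideanSpace 𝕜 n).IsSymmetric := by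
    rw [coe_toEuclideanCLM_eq_toEuclideanLin, isSymmetric_toEuclideanLin_iff]
    exact hM
  have hneg : -(c • 1) ≤ M ↔
      ∀ x, -(c * ‖x‖ ^ 2) ≤ (toEuclideanCLM (n := n) (𝕜 := 𝕜) M).reApplyInnerSelf x := by
    rw [neg_le, hM.neg.le_smul_one_iff, map_neg]
    simp only [ContinuousLinearMap.reApplyInnerSelf_apply, _root_.neg_apply, inner_neg_left,
      map_neg, neg_le]
  rw [hneg, hM.le_smul_one_iff, ← forall_and]
  simp_rw [← abs_le]
  constructor
  · intro h x
    grw [(toEuclideanCLM (n := n) (𝕜 := 𝕜) M).abs_reApplyInnerSelf_le x]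
    exact mul_le_mul_of_nonneg_right h (by positivity)
  · intro h
    change ‖toEuclideanCLM (n := n) (𝕜 := 𝕜) M‖ ≤ c
    rw [ContinuousLinearMap.norm_eq_iSup_rayleighQuotient _ hsymm]
    refine ciSup_le fun x => ?_
    rw [ContinuousLinearMap.rayleighQuotient, abs_div, abs_of_nonneg (sq_nonneg ‖x‖)]
    exact div_le_of_le_mul₀ (by positivity) hc (h x)

lemma inv_sub_inv_eq_conj (A B : Matrix n n 𝕜) [Invertible A] [Invertible B] :
    A⁻¹ - B⁻¹ = B⁻¹ * ((B - A) + (B - A) * A⁻¹ * (B - A)) * B⁻¹ := by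
  simp only [Matrix.mul_add, Matrix.add_mul, Matrix.mul_sub, Matrix.sub_mul, Matrix.mul_assoc,
    inv_mul_cancel_left_of_invertible, mul_inv_of_invertible, inv_mul_of_invertible,
    Matrix.one_mul, Matrix.mul_one]
  abel

lemma PosDef.inv_le_inv {A B : Matrix n n 𝕜} (hA : A.PosDef) (hAB : A ≤ B) : B⁻¹ ≤ A⁻¹ := by
  have hB : B.PosDef := by simpa using hA.add_posSemidef hAB
  let _ := hA.isUnit.invertible
  let _ := hB.isUnit.invertible
  have hP : (B - A).PosSemidef := hAB
  have hconj := (hP.add (hA.inv.posSemidef.conjTranspose_mul_mul_same (B - A)))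
    |>.mul_mul_conjTranspose_same B⁻¹
  rw [hP.isHermitian.eq, hB.isHermitian.inv] at hconj
  rwa [le_iff, inv_sub_inv_eq_conj]

lemma inv_smul_one {c : ℝ} (hc : c ≠ 0) : (c • (1 : Matrix n n 𝕜))⁻¹ = c⁻¹ • 1 :=
  inv_eq_left_inv (by rw [smul_mul_smul_comm, inv_mul_cancel₀ hc, Matrix.one_mul, one_smul])

/-- The matrix version of `1/t - 1/(t + e) ≤ e / (ρ (ρ + e))` for `t ≥ ρ`. -/
lemma inv_sub_inv_add_smul_one_le {A : Matrix n n 𝕜} {ρ e : ℝ} (hρ : 0 < ρ) (he : 0 ≤ e)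
    (hA : ρ • 1 ≤ A) : A⁻¹ - (A + e • 1)⁻¹ ≤ (e / (ρ * (ρ + e))) • 1 := by
  have hAe : (A + e • 1).PosDef := (posDef_of_smul_one_le hρ hA).add_posSemidef (.smul .one he)
  let _ := (posDef_of_smul_one_le hρ hA).isUnit.invertible
  let _ := hAe.isUnit.invertible
  have hP : (A - ρ • 1).PosSemidef := hA
  have hsub : A⁻¹ - (A + e • 1)⁻¹ = e • (A * (A + e • 1))⁻¹ := by
    rw [Matrix.mul_inv_rev]
    calc A⁻¹ - (A + e • 1)⁻¹ = (A + e • 1)⁻¹ * ((A + e • 1) - A) * A⁻¹ := by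
          simp only [Matrix.mul_sub, Matrix.sub_mul, Matrix.mul_assoc, inv_mul_of_invertible,
            mul_inv_of_invertible, Matrix.one_mul, Matrix.mul_one]
      _ = e • ((A + e • 1)⁻¹ * A⁻¹) := by
          rw [add_sub_cancel_left, Matrix.mul_smul, Matrix.mul_one, Matrix.smul_mul]
  have hprod : A * (A + e • 1) = (ρ * (ρ + e)) • 1 +
      ((A - ρ • 1)ᴴ * (A - ρ • 1) + (2 * ρ + e) • (A - ρ • 1)) := by
    rw [hP.isHermitian.eq]
    simp only [Matrix.mul_add, Matrix.sub_mul, Matrix.mul_sub, Matrix.smul_mul, Matrix.mul_smul,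
      Matrix.one_mul, Matrix.mul_one]
    module
  have hprod_inv : (A * (A + e • 1))⁻¹ ≤ (ρ * (ρ + e))⁻¹ • 1 := by
    rw [← inv_smul_one (by positivity)]
    refine (PosDef.one.smul (by positivity)).inv_le_inv ?_
    rw [hprod]
    exact le_add_of_nonneg_right
      ((posSemidef_conjTranspose_mul_self _).add (hP.smul (by positivity))).nonneg
  rw [hsub, le_iff, div_eq_mul_inv, mul_smul, ← smul_sub]
  exact hprod_inv.smul he

lemma inv_sub_inv_le_of_sub_le {A B : Matrix n n 𝕜} {ρ e : ℝ} (hρ : 0 < ρ) (he : 0 ≤ e)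
    (hA : ρ • 1 ≤ A) (hB : ρ • 1 ≤ B) (hAB : A - B ≤ e • 1) :
    B⁻¹ - A⁻¹ ≤ (e / (ρ * (ρ + e))) • 1 :=
  calc B⁻¹ - A⁻¹ ≤ B⁻¹ - (B + e • 1)⁻¹ :=
        sub_le_sub_left ((posDef_of_smul_one_le hρ hA).inv_le_inv (sub_le_iff_le_add'.mp hAB)) _
    _ ≤ (e / (ρ * (ρ + e))) • 1 := inv_sub_inv_add_smul_one_le hρ he hB

theorem norm_inv_sub_inv_le {A B : Matrix n n 𝕜} {ρ : ℝ} (hρ : 0 < ρ)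
    (hA : ρ • 1 ≤ A) (hB : ρ • 1 ≤ B) :
    ‖A⁻¹ - B⁻¹‖ ≤ ‖A - B‖ / (ρ * (ρ + ‖A - B‖)) := by
  have hApd := posDef_of_smul_one_le hρ hA
  have hBpd := posDef_of_smul_one_le hρ hB
  obtain ⟨hBA, hAB⟩ :=
    (hApd.isHermitian.sub hBpd.isHermitian).norm_le_iff (norm_nonneg _) |>.mp le_rfl
  rw [neg_le, neg_sub] at hBA
  rw [(hApd.isHermitian.inv.sub hBpd.isHermitian.inv).norm_le_iff (by positivity), neg_le,
    neg_sub]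
  exact ⟨inv_sub_inv_le_of_sub_le hρ (norm_nonneg _) hA hB hAB,
    inv_sub_inv_le_of_sub_le hρ (norm_nonneg _) hB hA hBA⟩

end Matrix

/-- Bound on the operator-norm difference of the resolvents
(Proposition 3.1 of Frangella et al. 2021). -/
theorem resolvent_difference_bound {p : ℕ}
    (H Hk : Matrix (Fin p) (Fin p) ℝ)
    (hH : H.PosSemidef) (hHk : Hk.PosSemidef) (ρ : ℝ) (hρ : 0 < ρ) :
    ‖(H + ρ • (1 : Matrix (Fin p) (Fin p) ℝ))⁻¹
        - (Hk + ρ • (1 : Matrix (Fin p) (Fin p) ℝ))⁻¹‖ ≤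
      ρ⁻¹ * (‖H - Hk‖ / (‖H - Hk‖ + ρ)) ∧
    (H - Hk = 0 →
      (H + ρ • (1 : Matrix (Fin p) (Fin p) ℝ))⁻¹
        - (Hk + ρ • (1 : Matrix (Fin p) (Fin p) ℝ))⁻¹ = 0) := by
  refine ⟨?_, fun h => by rw [sub_eq_zero.mp h, sub_self]⟩
  have hbound := norm_inv_sub_inv_le hρ (le_add_of_nonneg_left hH.nonneg)
    (le_add_of_nonneg_left hHk.nonneg)
  rw [add_sub_add_right_eq_sub] at hbound
  calc _ ≤ ‖H - Hk‖ / (ρ * (ρ + ‖H - Hk‖)) := hbound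
    _ = ρ⁻¹ * (‖H - Hk‖ / (‖H - Hk‖ + ρ)) := by
      rw [add_comm ρ, div_mul_eq_div_div_swap, div_eq_inv_mul (_ / _)]
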